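/- Let G = ℤ_{A₁} × ⋯ × ℤ_{A_N} be a product of finite cyclic groups and let a₁,…,a_N be positive integers with a_j ≤ A_j. The cube Q_{a₁,…,a_N} = [a₁] × ⋯ × [a_N] is a spectral set in G if and only if a_j divides A_j for every j = 1,…,N. -/

import Mathlib

/-- The discrete cube `[a₁] × ⋯ × [a_N]` inside `ℤ_{A₁} × ⋯ × ℤ_{A_N}`. -/
def cube {N : ℕ} (A a : Fin N → ℕ) : Finset (∀ j, ZMod (A j)) :=
  Finset.image (fun v : ∀ j, Fin (a j) => fun j => ((v j : ℕ) : ZMod (A j))) Finset.univ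

/-- The character of `ℤ_{A₁} × ⋯ × ℤ_{A_N}` attached to `λ`:
`e_λ(x) = exp(2πi Σ_j λ_j x_j / A_j)`. -/
noncomputable def ePi {N : ℕ} (A : Fin N → ℕ) (lam x : ∀ j, ZMod (A j)) : ℂ :=
  Complex.exp (2 * (Real.pi : ℂ) * Complex.I *
    ∑ j, ((lam j).val : ℂ) * ((x j).val : ℂ) / (A j : ℂ))

/-- `Λ` is a spectrum of `E`: the characters `e_λ`, `λ ∈ Λ`, restricted to `E`, are
pairwise orthogonal and there are `|E|` of them (hence they form an orthogonal basis
of the functions on `E`). -/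
def IsSpectrum {N : ℕ} (A : Fin N → ℕ) (E L : Finset (∀ j, ZMod (A j))) : Prop :=
  L.card = E.card ∧
  ∀ l ∈ L, ∀ m ∈ L, l ≠ m →
    ∑ x ∈ E, ePi A l x * (starRingEnd ℂ) (ePi A m x) = 0

/-!
Through `ZMod.stdAddChar` the characters factor over the coordinates, and the inner product of
`e_l` and `e_m` over the cube `Q_a` becomes `∏ j, ∑ t < a j, ψ (l j - m j) ^ t`. It vanishes iff
for some `j`, `l j ≠ m j` and `a j • (l j - m j) = 0` in `ℤ_{A j}`. If every `a j ∣ A j`, the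
lattice `∏ j, (A j / a j) • [a j]` is killed by the `a j`, hence is a spectrum. Conversely, the
condition `a j • d = 0` already forces `gcd (a j) (A j) • d = 0`, so a spectrum of `Q_a` is an
orthogonal family of characters on the smaller cube `Q_g`, `g j = gcd (a j) (A j)`. Orthogonal
vectors being independent, `∏ a j = |Λ| ≤ |Q_g| = ∏ g j`, which forces `g j = a j`.
-/

open Finset ZMod ComplexConjugate

lemma geom_sum_eq_zero_iff_pow_eq_one {K : Type*} [DivisionRing K] [CharZero K] {x : K} {n : ℕ}
    (hn : n ≠ 0) : ∑ i ∈ range n, x ^ i = 0 ↔ x ^ n = 1 ∧ x ≠ 1 := by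
  by_cases hx : x = 1
  · simp [hx, hn]
  · rw [geom_sum_eq hx, div_eq_zero_iff, sub_eq_zero, sub_eq_zero]
    tauto

lemma ZMod.gcd_nsmul_eq_zero {n a : ℕ} {d : ZMod n} (h : a • d = 0) :
    Nat.gcd a n • d = 0 := by
  have hn : n • d = 0 := by rw [nsmul_eq_mul, natCast_self, zero_mul]
  rw [← addOrderOf_dvd_iff_nsmul_eq_zero] at h hn ⊢
  exact Nat.dvd_gcd h hn

theorem card_le_card_of_pairwise_orthogonal {α ι : Type*} (f : ι → α → ℂ) {E : Finset α}
    {L : Finset ι} (hne : ∀ l ∈ L, ∃ x ∈ E, f l x ≠ 0)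
    (horth : ∀ l ∈ L, ∀ m ∈ L, l ≠ m → ∑ x ∈ E, f l x * conj (f m x) = 0) :
    L.card ≤ E.card := by
  let v : L → EuclideanSpace ℂ E := fun l => WithLp.toLp 2 fun x => f l x
  have hv : LinearIndependent ℂ v := by
    refine linearIndependent_of_ne_zero_of_inner_eq_zero (fun l hl => ?_) fun l m hlm => ?_
    · obtain ⟨x, hx, hfx⟩ := hne l l.2
      exact hfx (congrArg (fun w : EuclideanSpace ℂ E => w ⟨x, hx⟩) hl)
    · change inner ℂ (v l) (v m) = 0
      rw [PiLp.inner_apply, ← horth m m.2 l l.2 (Subtype.coe_ne_coe.mpr (Ne.symm hlm)),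
        ← sum_coe_sort E]
      exact Fintype.sum_congr _ _ fun x => by simp [v]
  simpa using hv.fintype_card_le_finrank

section Cube

variable {N : ℕ} {A a : Fin N → ℕ}

lemma injective_natCast_fin (hle : ∀ j, a j ≤ A j) :
    Function.Injective fun v : ∀ j, Fin (a j) => fun j => ((v j : ℕ) : ZMod (A j)) := by
  intro v w h
  funext j
  have hj := congrFun h j
  rw [natCast_eq_natCast_iff', Nat.mod_eq_of_lt ((v j).2.trans_le (hle j)),
    Nat.mod_eq_of_lt ((w j).2.trans_le (hle j))] at hj
  exact Fin.ext hj

lemma card_cube (hle : ∀ j, a j ≤ A j) : (cube A a).card = ∏ j, a j := by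
  rw [cube, card_image_of_injective _ (injective_natCast_fin hle)]
  simp

lemma cube_nonempty (ha : ∀ j, 0 < a j) : (cube A a).Nonempty :=
  (univ_nonempty_iff.mpr ⟨fun j => ⟨0, ha j⟩⟩).image _

def cubeSpectrum (A a : Fin N → ℕ) : Finset (∀ j, ZMod (A j)) :=
  univ.image fun v : ∀ j, Fin (a j) => fun j => ((A j / a j * v j : ℕ) : ZMod (A j))

lemma nsmul_eq_zero_of_mem_cubeSpectrum (hdvd : ∀ j, a j ∣ A j) {l : ∀ j, ZMod (A j)}
    (hl : l ∈ cubeSpectrum A a) (j : Fin N) : a j • l j = 0 := by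
  obtain ⟨v, -, rfl⟩ := mem_image.mp hl
  rw [nsmul_eq_mul, ← Nat.cast_mul, ← mul_assoc, Nat.mul_div_cancel' (hdvd j), Nat.cast_mul,
    natCast_self, zero_mul]

variable [∀ j, NeZero (A j)]

lemma ePi_eq_prod_stdAddChar (l x : ∀ j, ZMod (A j)) :
    ePi A l x = ∏ j, stdAddChar (l j * x j) := by
  rw [ePi, mul_sum, Complex.exp_sum]
  refine prod_congr rfl fun j _ => ?_
  have hlx : l j * x j = (((l j).val * (x j).val : ℕ) : ZMod (A j)) := by simp
  rw [hlx, stdAddChar_apply, toCircle_natCast]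
  push_cast
  ring_nf

lemma ePi_mul_conj_ePi (l m x : ∀ j, ZMod (A j)) :
    ePi A l x * conj (ePi A m x) = ∏ j, stdAddChar ((l j - m j) * x j) := by
  simp only [ePi_eq_prod_stdAddChar, map_prod, ← AddChar.map_neg_eq_conj, ← prod_mul_distrib,
    ← AddChar.map_add_eq_mul, sub_eq_add_neg, add_mul, neg_mul]

lemma sum_cube_ePi_mul_conj (hle : ∀ j, a j ≤ A j) (l m : ∀ j, ZMod (A j)) :
    ∑ x ∈ cube A a, ePi A l x * conj (ePi A m x) =
      ∏ j, ∑ t ∈ range (a j), stdAddChar (l j - m j) ^ t := by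
  simp only [← Fin.sum_univ_eq_sum_range, Fintype.prod_sum, ePi_mul_conj_ePi, cube,
    sum_image fun v _ w _ h => injective_natCast_fin hle h]
  refine Fintype.sum_congr _ _ fun v => prod_congr rfl fun j _ => ?_
  rw [mul_comm, ← nsmul_eq_mul, AddChar.map_nsmul_eq_pow]

theorem sum_cube_ePi_mul_conj_eq_zero_iff (ha : ∀ j, 0 < a j) (hle : ∀ j, a j ≤ A j)
    (l m : ∀ j, ZMod (A j)) :
    ∑ x ∈ cube A a, ePi A l x * conj (ePi A m x) = 0 ↔
      ∃ j, l j ≠ m j ∧ a j • (l j - m j) = 0 := by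
  rw [sum_cube_ePi_mul_conj hle, prod_eq_zero_iff]
  simp only [mem_univ, true_and]
  refine exists_congr fun j => ?_
  rw [geom_sum_eq_zero_iff_pow_eq_one (ha j).ne', ← AddChar.map_nsmul_eq_pow]
  simp only [(isPrimitive_stdAddChar _).zmod_char_eq_one_iff, Ne, sub_eq_zero, and_comm]

theorem dvd_of_isSpectrum_cube (ha : ∀ j, 0 < a j) (hle : ∀ j, a j ≤ A j)
    {L : Finset (∀ j, ZMod (A j))} (hL : IsSpectrum A (cube A a) L) (j : Fin N) :
    a j ∣ A j := by
  set g : Fin N → ℕ := fun j => Nat.gcd (a j) (A j)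
  have hg_pos : ∀ j, 0 < g j := fun j => Nat.gcd_pos_of_pos_left _ (ha j)
  have hg_le : ∀ j, g j ≤ a j := fun j => Nat.gcd_le_left _ (ha j)
  have hgA : ∀ j, g j ≤ A j := fun j => (hg_le j).trans (hle j)
  have horth : ∀ l ∈ L, ∀ m ∈ L, l ≠ m →
      ∑ x ∈ cube A g, ePi A l x * conj (ePi A m x) = 0 := by
    intro l hl m hm hlm
    obtain ⟨i, hne, hi⟩ :=
      (sum_cube_ePi_mul_conj_eq_zero_iff ha hle l m).1 (hL.2 l hl m hm hlm)
    exact (sum_cube_ePi_mul_conj_eq_zero_iff hg_pos hgA l m).2 ⟨i, hne, gcd_nsmul_eq_zero hi⟩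
  have hprod : ∏ i, a i ≤ ∏ i, g i := by
    rw [← card_cube hle, ← hL.1, ← card_cube hgA]
    obtain ⟨x, hx⟩ := cube_nonempty hg_pos
    exact card_le_card_of_pairwise_orthogonal (ePi A)
      (fun _ _ => ⟨x, hx, Complex.exp_ne_zero _⟩) horth
  have hga : g j = a j := by
    by_contra hne
    exact hprod.not_gt <| prod_lt_prod (fun i _ => hg_pos i) (fun i _ => hg_le i)
      ⟨j, mem_univ j, (hg_le j).lt_of_ne hne⟩
  exact Nat.gcd_eq_left_iff_dvd.mp hga

lemma card_cubeSpectrum (hdvd : ∀ j, a j ∣ A j) : (cubeSpectrum A a).card = ∏ j, a j := by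
  have hb : ∀ j, 0 < A j / a j := fun j =>
    Nat.div_pos (Nat.le_of_dvd (NeZero.pos _) (hdvd j))
      (Nat.pos_of_dvd_of_pos (hdvd j) (NeZero.pos _))
  have hlt : ∀ (v : ∀ j, Fin (a j)) j, A j / a j * v j < A j := fun v j =>
    calc A j / a j * v j < A j / a j * a j := Nat.mul_lt_mul_of_pos_left (v j).2 (hb j)
      _ = A j := Nat.div_mul_cancel (hdvd j)
  have hscale : Function.Injective fun v : ∀ j, Fin (a j) =>
      fun j => (⟨A j / a j * v j, hlt v j⟩ : Fin (A j)) := fun v w h =>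
    funext fun j => Fin.ext (Nat.eq_of_mul_eq_mul_left (hb j) (congrArg Fin.val (congrFun h j)))
  rw [cubeSpectrum, card_image_of_injective _ ?_]
  · simp
  · exact (injective_natCast_fin fun _ => le_rfl).comp hscale

theorem isSpectrum_cubeSpectrum (hdvd : ∀ j, a j ∣ A j) :
    IsSpectrum A (cube A a) (cubeSpectrum A a) := by
  have ha : ∀ j, 0 < a j := fun j => Nat.pos_of_dvd_of_pos (hdvd j) (NeZero.pos _)
  have hle : ∀ j, a j ≤ A j := fun j => Nat.le_of_dvd (NeZero.pos _) (hdvd j)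
  refine ⟨(card_cubeSpectrum hdvd).trans (card_cube hle).symm, fun l hl m hm hlm => ?_⟩
  obtain ⟨j, hj⟩ := Function.ne_iff.mp hlm
  refine (sum_cube_ePi_mul_conj_eq_zero_iff ha hle l m).2 ⟨j, hj, ?_⟩
  rw [nsmul_sub, nsmul_eq_zero_of_mem_cubeSpectrum hdvd hl,
    nsmul_eq_zero_of_mem_cubeSpectrum hdvd hm, sub_zero]

end Cube

theorem cube_spectral_iff_dvd {N : ℕ} (A a : Fin N → ℕ) [∀ j, NeZero (A j)]
    (ha : ∀ j, 0 < a j) (hle : ∀ j, a j ≤ A j) :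
    (∃ L : Finset (∀ j, ZMod (A j)), IsSpectrum A (cube A a) L) ↔ ∀ j, a j ∣ A j :=
  ⟨fun ⟨_, hL⟩ => dvd_of_isSpectrum_cube ha hle hL,
    fun hdvd => ⟨_, isSpectrum_cubeSpectrum hdvd⟩⟩
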